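/- arXiv:2401.14385 — 3 statements merged into one kernel-verified Lean document; each statement's English description precedes it below -/
import Mathlib

section
/- Trace-distance quantum CLT: for every n-qudit state ρ with zero mean (d an odd prime) and every N ≥ 1, ‖⊠^N ρ − M(ρ)‖₁ ≤ √2 · (1 − MG(ρ))^{N−1} · √(Tr(ρ²)·R(ρ) − 1). -/
open scoped BigOperators ENNReal
open Classical Matrix ComplexOrder

noncomputable section

namespace QW

/-- The computational-basis index set of an `n`-qudit system: `ℤ_d^n`. -/
abbrev Idx (d n : ℕ) := Fin n → ZMod d

/-- Linear operators (matrices) on `(ℂ^d)^{⊗ n}`. -/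
abbrev Mat (d n : ℕ) := Matrix (Idx d n) (Idx d n) ℂ

/-- The phase space `V^n = ℤ_d^n × ℤ_d^n`. -/
abbrev PhSp (d n : ℕ) := Idx d n × Idx d n

/-- von Neumann entropy `S(ρ) = -Tr (ρ log ρ)`, computed via eigenvalues
(with the convention `0 log 0 = 0`); junk value `0` on non-Hermitian matrices. -/
def entropy {I : Type} [Fintype I] [DecidableEq I] (ρ : Matrix I I ℂ) : ℝ :=
  if h : ρ.IsHermitian then -∑ i, h.eigenvalues i * Real.log (h.eigenvalues i) else 0

/-- The purity `Tr(ρ²)` (as a real number). -/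
def purity {I : Type} [Fintype I] [DecidableEq I] (ρ : Matrix I I ℂ) : ℝ :=
  ((ρ * ρ).trace).re

/-- Matrix (functional-calculus) logarithm of a Hermitian matrix. -/
def matLog {I : Type} [Fintype I] [DecidableEq I] (ρ : Matrix I I ℂ) : Matrix I I ℂ :=
  if h : ρ.IsHermitian then
    (h.eigenvectorUnitary : Matrix I I ℂ) *
      Matrix.diagonal (fun i => (Real.log (h.eigenvalues i) : ℂ)) *
      (h.eigenvectorUnitary : Matrix I I ℂ)ᴴ
  else 0

/-- Quantum relative entropy `D(ρ‖σ) = Tr(ρ (log ρ - log σ))` when the support of `ρ`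
is contained in the support of `σ` (i.e. `ker σ ⊆ ker ρ`), and `+∞` otherwise. -/
def relEnt {I : Type} [Fintype I] [DecidableEq I] (ρ σ : Matrix I I ℂ) : EReal :=
  if ∀ v, σ.mulVec v = 0 → ρ.mulVec v = 0 then
    (((ρ * (matLog ρ - matLog σ)).trace).re : EReal)
  else ⊤

/-- Quantum Rényi entropy `S_α` for `α ∈ [0,∞]`, with `S_1 = S` and
`S_∞ = -log λ_max`. -/
def renyi {I : Type} [Fintype I] [DecidableEq I] [Nonempty I] (α : ℝ≥0∞)
    (ρ : Matrix I I ℂ) : ℝ :=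
  if h : ρ.IsHermitian then
    if α = 1 then entropy ρ
    else if α = ⊤ then -Real.log (Finset.univ.sup' Finset.univ_nonempty h.eigenvalues)
    else (1 - α.toReal)⁻¹ * Real.log (∑ i, h.eigenvalues i ^ α.toReal)
  else 0

/-- Trace norm `‖A‖₁ = Tr √(AᴴA)`. -/
def traceNorm {I : Type} [Fintype I] [DecidableEq I] (A : Matrix I I ℂ) : ℝ :=
  ∑ i, Real.sqrt ((Matrix.isHermitian_conjTranspose_mul_self A).eigenvalues i)

variable (d n : ℕ)

/-- A quantum state: positive semidefinite with unit trace. -/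
def IsState [NeZero d] (ρ : Mat d n) : Prop := ρ.PosSemidef ∧ ρ.trace = 1

/-- The phase `ω^a = e^{2πia/d}` for `a : ℤ_d`. -/
def qphase (a : ZMod d) : ℂ :=
  Complex.exp (2 * (Real.pi : ℂ) * Complex.I * (a.val : ℂ) / (d : ℂ))

/-- The `n`-qudit Weyl operator `w(p,q) = w(p₁,q₁) ⊗ ⋯ ⊗ w(pₙ,qₙ)`, where
`w(p,q) = ω^{-2⁻¹pq} Z^p X^q` with `2⁻¹ = (d+1)/2` in `ℤ_d`. -/
def weyl [NeZero d] (p q : Idx d n) : Mat d n :=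
  Matrix.of fun j k =>
    ∏ i, (if j i = k i + q i then
      qphase d (p i * (k i + q i) - (((d + 1) / 2 : ℕ) : ZMod d) * (p i * q i)) else 0)

/-- Weyl operator indexed by a phase-space point. -/
def weylP [NeZero d] (x : PhSp d n) : Mat d n := weyl d n x.1 x.2

/-- The characteristic function `Ξ_ρ(x) = Tr(ρ w(-x))`. -/
def charFun [NeZero d] (ρ : Mat d n) (x : PhSp d n) : ℂ := (ρ * weylP d n (-x)).trace

/-- The mean state `M(ρ)`: the operator whose characteristic function agrees with `Ξ_ρ`
where `|Ξ_ρ| = 1` and vanishes elsewhere. -/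
def meanState [NeZero d] (ρ : Mat d n) : Mat d n :=
  ((d : ℂ) ^ n)⁻¹ •
    ∑ x : PhSp d n,
      (if ‖charFun d n ρ x‖ = 1 then charFun d n ρ x else 0) • weylP d n x

/-- The magic gap `MG(ρ) = 1 - max{|Ξ_ρ(x)| : Ξ_ρ(x) ≠ 0, |Ξ_ρ(x)| ≠ 1}`,
set to `0` if that set is empty. -/
def magicGap [NeZero d] (ρ : Mat d n) : ℝ :=
  let T := Finset.univ.filter
    (fun x : PhSp d n => charFun d n ρ x ≠ 0 ∧ ‖charFun d n ρ x‖ ≠ 1)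
  if h : T.Nonempty then 1 - T.sup' h (fun x => ‖charFun d n ρ x‖) else 0

/-- `R(ρ)`: the rank of the mean state `M(ρ)`. -/
def mrank [NeZero d] (ρ : Mat d n) : ℕ := (meanState d n ρ).rank

/-- The unitary `U_{s,t} = ∑ |si+tj⟩⟨i| ⊗ |-ti+sj⟩⟨j|` implementing the convolution. -/
def convU [NeZero d] (s t : ZMod d) :
    Matrix (Idx d n × Idx d n) (Idx d n × Idx d n) ℂ :=
  Matrix.of fun a b =>
    if a.1 = s • b.1 + t • b.2 ∧ a.2 = -(t • b.1) + s • b.2 then 1 else 0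

/-- Tensor (Kronecker) product of two `n`-qudit operators. -/
def kron (ρ σ : Mat d n) : Matrix (Idx d n × Idx d n) (Idx d n × Idx d n) ℂ :=
  Matrix.of fun x y => ρ x.1 y.1 * σ x.2 y.2

/-- The quantum convolution `ρ ⊠_{s,t} σ = Tr_B (U_{s,t} (ρ ⊗ σ) U_{s,t}ᴴ)`. -/
def qconv [NeZero d] (s t : ZMod d) (ρ σ : Mat d n) : Mat d n :=
  Matrix.of fun a a' =>
    ∑ b, (convU d n s t * kron d n ρ σ * (convU d n s t)ᴴ) (a, b) (a', b)

/-- Iterated self-convolution: `boxPow s t ρ N = ⊠^{N+1} ρ`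
(so `boxPow s t ρ 0 = ⊠^1 ρ = ρ`). -/
def boxPow [NeZero d] (s t : ZMod d) (ρ : Mat d n) : ℕ → Mat d n
  | 0 => ρ
  | N + 1 => qconv d n s t (boxPow s t ρ N) ρ

/-- `ρ` has zero mean: `Ξ_{M(ρ)}` takes only the values 0 and 1. -/
def ZeroMean [NeZero d] (ρ : Mat d n) : Prop :=
  ∀ x, charFun d n (meanState d n ρ) x = 0 ∨ charFun d n (meanState d n ρ) x = 1

/-- The quantum doubling constant `δ_q[ρ] = exp(S(ρ⊠ρ) - S(ρ))`. -/
def doubling [NeZero d] (s t : ZMod d) (ρ : Mat d n) : ℝ :=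
  Real.exp (entropy (qconv d n s t ρ ρ) - entropy ρ)

/-- The quantum Ruzsa divergence `D_{Rz}(ρ‖σ) = S(ρ⊠σ) - S(ρ)`. -/
def ruzsaDiv [NeZero d] (s t : ZMod d) (ρ σ : Mat d n) : ℝ :=
  entropy (qconv d n s t ρ σ) - entropy ρ

/-- The symmetrized quantum Ruzsa divergence
`d_{Rz}(ρ,σ) = ½(S(ρ⊠σ) + S(σ⊠ρ) - S(ρ) - S(σ))`. -/
def ruzsaSym [NeZero d] (s t : ZMod d) (ρ σ : Mat d n) : ℝ :=
  (entropy (qconv d n s t ρ σ) + entropy (qconv d n s t σ ρ)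
    - entropy ρ - entropy σ) / 2

/-- Minimal stabilizer-projection state: `ρ = d^{-(n-r)} Π_{i=1}^r (d⁻¹ ∑_k gᵢᵏ)` where the
`gᵢ = ω^{cᵢ} w(xᵢ) ∈ 𝒫_n` commute and generate an abelian subgroup of size `d^r` modulo
phases (i.e. the phase-space points `xᵢ` generate a subgroup of `V^n` of size `d^r`). -/
def IsMSPS [NeZero d] (ρ : Mat d n) : Prop :=
  ∃ r : ℕ, r ≤ n ∧
  ∃ (g : Fin r → Mat d n) (x : Fin r → PhSp d n) (c : Fin r → ZMod d),
    (∀ i, g i = qphase d (c i) • weylP d n (x i)) ∧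
    (∀ i j, Commute (g i) (g j)) ∧
    Nat.card (AddSubgroup.closure (Set.range x)) = d ^ r ∧
    ρ = ((d : ℂ) ^ (n - r))⁻¹ •
      (((List.finRange r).map
        (fun i => ((d : ℂ))⁻¹ • ∑ k : ZMod d, g i ^ (k.val))).prod)

/-- Pure stabilizer state: a rank-one projection `Π_{i=1}^n (d⁻¹ ∑_k gᵢᵏ)` where the
`gᵢ = ω^{cᵢ} w(xᵢ) ∈ 𝒫_n` commute and generate an abelian subgroup of size `d^n`
modulo phases. -/
def IsPureStab [NeZero d] (ρ : Mat d n) : Prop :=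
  ρ.rank = 1 ∧
  ∃ (g : Fin n → Mat d n) (x : Fin n → PhSp d n) (c : Fin n → ZMod d),
    (∀ i, g i = qphase d (c i) • weylP d n (x i)) ∧
    (∀ i j, Commute (g i) (g j)) ∧
    Nat.card (AddSubgroup.closure (Set.range x)) = d ^ n ∧
    ρ = (((List.finRange n).map
        (fun i => ((d : ℂ))⁻¹ • ∑ k : ZMod d, g i ^ (k.val))).prod)

/-- A (mixed) stabilizer state: a convex combination of pure stabilizer states. -/
def IsStab [NeZero d] (ρ : Mat d n) : Prop :=
  ∃ (k : ℕ) (p : Fin k → ℝ) (φ : Fin k → Mat d n),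
    (∀ i, 0 ≤ p i) ∧ (∑ i, p i = 1) ∧ (∀ i, IsPureStab d n (φ i)) ∧
    ρ = ∑ i, (p i : ℂ) • φ i

/-- Clifford unitary: a unitary mapping every Weyl operator to a Weyl operator up to phase. -/
def IsClifford [NeZero d] (U : Mat d n) : Prop :=
  U * Uᴴ = 1 ∧ Uᴴ * U = 1 ∧
  ∀ x : PhSp d n, ∃ (c : ℂ) (y : PhSp d n),
    ‖c‖ = 1 ∧ U * weylP d n x * Uᴴ = c • weylP d n y

/-- Tensor product of an `n₁`-qudit operator and an `n₂`-qudit operator. -/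
def tensorState {n₁ n₂ : ℕ} (ρ₁ : Mat d n₁) (ρ₂ : Mat d n₂) : Mat d (n₁ + n₂) :=
  Matrix.of fun x y =>
    ρ₁ (fun i => x (Fin.castAdd n₂ i)) (fun i => y (Fin.castAdd n₂ i)) *
    ρ₂ (fun i => x (Fin.natAdd n₁ i)) (fun i => y (Fin.natAdd n₁ i))

/-- Partial trace over the `i`-th qudit. -/
def ptraceAt [NeZero d] {m : ℕ} (i : Fin (m + 1)) (M : Mat d (m + 1)) : Mat d m :=
  Matrix.of fun a a' => ∑ c : ZMod d, M (i.insertNth c a) (i.insertNth c a')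

end QW

/-! Let `S` be the set of phase-space points where `|Ξ_ρ| = 1`. The characteristic function is
multiplicative under convolution, `Ξ_{ρ ⊠ σ}(x) = Ξ_ρ(s x) Ξ_σ(t x)`. For a state of zero mean,
`S` is an isotropic subspace on which `Ξ_ρ = 1`, so `Ξ_{⊠^N ρ}` is `1` on `S` and, off `S`, at most
`(1 - MG)^{N-1} |Ξ_ρ(s^{N-1} x)|`. By Parseval, `‖⊠^N ρ - M(ρ)‖₂² = d⁻ⁿ ∑_{x ∉ S} |Ξ_{⊠^N ρ}(x)|²`
is therefore at most `(1 - MG)^{2(N-1)} (Tr ρ² - |S|/dⁿ)`. Moreover `M(ρ)` is `|S|/dⁿ` times the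
projector `|S|⁻¹ ∑_{x ∈ S} w(x)`, of rank `R(ρ) = dⁿ/|S|`, and `⊠^N ρ` is absorbed by that
projector, so `rank (⊠^N ρ - M(ρ)) ≤ R(ρ)`. Cauchy–Schwarz, `‖A‖₁ ≤ √(rank A) ‖A‖₂`, concludes. -/

lemma AddChar.map_sum_eq_prod {A M ι : Type*} [AddCommMonoid A] [CommMonoid M] (ψ : AddChar A M)
    (s : Finset ι) (f : ι → A) : ψ (∑ i ∈ s, f i) = ∏ i ∈ s, ψ (f i) := by
  induction s using Finset.cons_induction with
  | empty => simp
  | cons i s hi ih => rw [Finset.sum_cons, Finset.prod_cons, AddChar.map_add_eq_mul, ih]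

lemma Matrix.PosSemidef.mul_eq_zero_of_trace_conjTranspose_mul_mul_eq_zero {I : Type*} [Fintype I]
    [DecidableEq I] {ρ C : Matrix I I ℂ} (hρ : ρ.PosSemidef) (h : (Cᴴ * ρ * C).trace = 0) :
    ρ * C = 0 := by
  open MatrixOrder Matrix.Norms.L2Operator in
  obtain ⟨B, rfl⟩ := CStarAlgebra.nonneg_iff_eq_star_mul_self.mp hρ.nonneg
  rw [star_eq_conjTranspose] at h ⊢
  have hBC : B * C = 0 := by
    rw [← trace_conjTranspose_mul_self_eq_zero_iff, conjTranspose_mul]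
    simpa only [Matrix.mul_assoc] using h
  rw [Matrix.mul_assoc, hBC, Matrix.mul_zero]

lemma Matrix.PosSemidef.mul_eq_self_of_trace_mul_eq_one {I : Type*} [Fintype I] [DecidableEq I]
    {ρ U : Matrix I I ℂ} (hρ : ρ.PosSemidef) (htr : ρ.trace = 1) (hU : U * Uᴴ = 1)
    (h : (ρ * U).trace = 1) : ρ * U = ρ := by
  have h' : (Uᴴ * ρ).trace = 1 := by
    rw [← hρ.1.eq, ← conjTranspose_mul, trace_conjTranspose, h, star_one]
  have h'' : (Uᴴ * ρ * U).trace = 1 := by rw [trace_mul_cycle, hU, Matrix.one_mul, htr]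
  have h0 := hρ.mul_eq_zero_of_trace_conjTranspose_mul_mul_eq_zero (C := U - 1) (by
    simp only [conjTranspose_sub, conjTranspose_one, Matrix.sub_mul, Matrix.mul_sub, Matrix.one_mul,
      Matrix.mul_one, trace_sub, h, h', h'', htr]
    ring)
  rwa [Matrix.mul_sub, Matrix.mul_one, sub_eq_zero] at h0

lemma Matrix.rank_eq_trace_of_isIdempotentElem {K ι : Type*} [Field K] [Fintype ι] [DecidableEq ι]
    {P : Matrix ι ι K} (hP : IsIdempotentElem P) : (P.rank : K) = P.trace := by
  have he : IsIdempotentElem (Matrix.toLin' P) := by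
    rw [IsIdempotentElem, Module.End.mul_eq_comp, ← Matrix.toLin'_mul, hP.eq]
  rw [← Matrix.trace_toLin'_eq, ((LinearMap.isProj_range_iff_isIdempotentElem _).mpr he).trace]
  rfl

open scoped Kronecker in
lemma Matrix.trace_partialTrace_mul {I J : Type*} [Fintype I] [Fintype J] [DecidableEq J]
    (K : Matrix (I × J) (I × J) ℂ) (W : Matrix I I ℂ) :
    ((of fun a a' => ∑ b, K (a, b) (a', b)) * W).trace = (K * (W ⊗ₖ 1)).trace := by
  simp only [trace, diag_apply, mul_apply, of_apply, Finset.sum_mul, kroneckerMap_apply,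
    one_apply, mul_ite, mul_one, mul_zero, Fintype.sum_prod_type, Finset.sum_ite_eq',
    Finset.mem_univ, if_true]
  exact Finset.sum_congr rfl fun _ _ => Finset.sum_comm

namespace QW

variable {d n : ℕ}

open ZMod (stdAddChar)
open scoped Kronecker

lemma traceNorm_le_sqrt_rank_mul_sqrt_trace {I : Type} [Fintype I] [DecidableEq I]
    (A : Matrix I I ℂ) : traceNorm A ≤ √(A.rank : ℝ) * √((Aᴴ * A).trace.re) := by
  set h := isHermitian_conjTranspose_mul_self A
  set S := Finset.univ.filter fun i => h.eigenvalues i ≠ 0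
  have hnn : ∀ i, 0 ≤ h.eigenvalues i := (posSemidef_conjTranspose_mul_self A).eigenvalues_nonneg
  have hcard : S.card = A.rank := by
    rw [← rank_conjTranspose_mul_self A, h.rank_eq_card_non_zero_eigs, Fintype.card_subtype]
  have htr : (Aᴴ * A).trace.re = ∑ i ∈ S, h.eigenvalues i := by
    rw [h.trace_eq_sum_eigenvalues, Complex.re_sum, Finset.sum_filter_ne_zero]
    rfl
  have hsum : traceNorm A = ∑ i ∈ S, √(h.eigenvalues i) := by
    rw [traceNorm]
    have hS : ∀ i ∈ Finset.univ, √(h.eigenvalues i) ≠ 0 → h.eigenvalues i ≠ 0 :=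
      fun i _ hi h0 => hi (by rw [h0, Real.sqrt_zero])
    exact (Finset.sum_filter_of_ne hS).symm
  rw [hsum, htr, ← Real.sqrt_mul (Nat.cast_nonneg _), ← hcard]
  refine Real.le_sqrt_of_sq_le ?_
  calc (∑ i ∈ S, √(h.eigenvalues i)) ^ 2 ≤ S.card * ∑ i ∈ S, √(h.eigenvalues i) ^ 2 :=
        sq_sum_le_card_mul_sum_sq
    _ = S.card * ∑ i ∈ S, h.eigenvalues i := by simp_rw [Real.sq_sqrt (hnn _)]

lemma qphase_eq_stdAddChar [NeZero d] (a : ZMod d) : qphase d a = stdAddChar a := by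
  rw [ZMod.stdAddChar_apply, ZMod.toCircle_apply]; rfl

def half (d : ℕ) : ZMod d := (((d + 1) / 2 : ℕ) : ZMod d)

lemma two_mul_half (hd : Odd d) : 2 * half d = 1 := by
  obtain ⟨k, rfl⟩ := hd
  have hk : (2 * k + 1 + 1) / 2 = k + 1 := by omega
  have hd : ((2 * k + 1 : ℕ) : ZMod (2 * k + 1)) = 0 := ZMod.natCast_self _
  rw [half, hk]
  push_cast at hd ⊢
  linear_combination hd

lemma sum_stdAddChar_dotProduct [NeZero d] (w : Idx d n) :
    ∑ p : Idx d n, stdAddChar (p ⬝ᵥ w) = if w = 0 then (d : ℂ) ^ n else 0 := by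
  simp_rw [dotProduct, AddChar.map_sum_eq_prod]
  rw [← Fintype.prod_sum (fun i (v : ZMod d) => stdAddChar (v * w i))]
  simp_rw [AddChar.sum_mulShift _ (ZMod.isPrimitive_stdAddChar d), ZMod.card, Nat.cast_ite,
    Nat.cast_zero, Finset.prod_ite_zero, Finset.prod_const, Finset.card_univ, Fintype.card_fin]
  exact if_congr (by simp [funext_iff]) rfl rfl

def symp (x y : PhSp d n) : ZMod d := x.1 ⬝ᵥ y.2 - y.1 ⬝ᵥ x.2

lemma symp_self_neg (x : PhSp d n) : symp x (-x) = 0 := by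
  simp [symp, dotProduct_comm x.1 x.2]

section Weyl

variable [NeZero d]

lemma weylP_apply (x : PhSp d n) (j k : Idx d n) :
    weylP d n x j k =
      if j = k + x.2 then stdAddChar (x.1 ⬝ᵥ j - half d * (x.1 ⬝ᵥ x.2)) else 0 := by
  simp only [weylP, weyl, of_apply, Fintype.prod_ite_zero, qphase_eq_stdAddChar]
  by_cases h : j = k + x.2
  · subst h
    rw [if_pos (by simp), if_pos rfl, ← AddChar.map_sum_eq_prod]
    simp only [dotProduct, Finset.sum_sub_distrib, Finset.mul_sum, Pi.add_apply, half]
  · rw [if_neg (by simpa [funext_iff] using h), if_neg h]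

lemma weylP_zero : weylP d n 0 = 1 := by
  ext j k
  simp [weylP_apply, one_apply]

lemma weylP_mul (hd : Odd d) (x y : PhSp d n) :
    weylP d n x * weylP d n y = stdAddChar (half d * symp x y) • weylP d n (x + y) := by
  ext j k
  rw [mul_apply, Finset.sum_eq_single (k + y.2), Matrix.smul_apply, smul_eq_mul]
  · simp only [weylP_apply, Prod.snd_add, Prod.fst_add, ← add_assoc, add_right_comm k]
    split_ifs with h
    · subst h
      rw [← AddChar.map_add_eq_mul, ← AddChar.map_add_eq_mul]
      congr 1
      simp only [symp, dotProduct_add, add_dotProduct]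
      linear_combination (y.1 ⬝ᵥ x.2) * two_mul_half hd
    · simp
  · intro b _ hb
    rw [weylP_apply y b k, if_neg hb, mul_zero]
  · simp

lemma weylP_conjTranspose (hd : Odd d) (x : PhSp d n) : (weylP d n x)ᴴ = weylP d n (-x) := by
  ext j k
  simp only [conjTranspose_apply, weylP_apply, Prod.fst_neg, Prod.snd_neg, ← sub_eq_add_neg]
  by_cases h : k = j + x.2
  · rw [if_pos h, if_pos (eq_sub_of_add_eq h.symm), ← starRingEnd_apply,
      ← AddChar.map_neg_eq_conj, h]
    congr 1
    simp only [dotProduct_add, neg_dotProduct, dotProduct_neg, neg_neg]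
    linear_combination (x.1 ⬝ᵥ x.2) * two_mul_half hd
  · rw [if_neg h, if_neg fun h' => h (by rw [h', sub_add_cancel]), star_zero]

lemma weylP_mul_weylP_neg (hd : Odd d) (x : PhSp d n) : weylP d n x * weylP d n (-x) = 1 := by
  rw [weylP_mul hd, symp_self_neg, mul_zero, AddChar.map_zero_eq_one, one_smul, add_neg_cancel,
    weylP_zero]

lemma trace_weylP (x : PhSp d n) : (weylP d n x).trace = if x = 0 then (d : ℂ) ^ n else 0 := by
  simp only [trace, diag_apply, weylP_apply, left_eq_add]
  by_cases hq : x.2 = 0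
  · simp_rw [if_pos hq, hq, dotProduct_zero, mul_zero, sub_zero, dotProduct_comm x.1,
      sum_stdAddChar_dotProduct, Prod.ext_iff, hq, Prod.fst_zero, Prod.snd_zero, and_true]
  · simp [hq, Prod.ext_iff]

lemma trace_weylP_mul_weylP_neg (hd : Odd d) (x y : PhSp d n) :
    (weylP d n x * weylP d n (-y)).trace = if x = y then (d : ℂ) ^ n else 0 := by
  rw [weylP_mul hd, trace_smul, trace_weylP, smul_eq_mul]
  simp only [add_neg_eq_zero]
  split_ifs with h
  · rw [h, symp_self_neg, mul_zero, AddChar.map_zero_eq_one, one_mul]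
  · rw [mul_zero]

/-- Completeness of the Weyl operators: `∑ₓ w(x) ⊗ w(x)ᴴ` is `dⁿ` times the swap. -/
lemma sum_weylP_apply_mul_weylP_neg_apply (hd : Odd d) (u v y z : Idx d n) :
    ∑ x : PhSp d n, weylP d n x u v * weylP d n (-x) y z =
      if u = z ∧ v = y then (d : ℂ) ^ n else 0 := by
  have hterm : ∀ p q : Idx d n, weylP d n (p, q) u v * weylP d n (-(p, q)) y z =
      if u = v + q ∧ y = z - q then stdAddChar (p ⬝ᵥ (v - y)) else 0 := by
    intro p q
    simp only [weylP_apply, Prod.fst_neg, Prod.snd_neg, ← sub_eq_add_neg, ite_zero_mul_ite_zero]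
    split_ifs with h
    · rw [h.1, ← AddChar.map_add_eq_mul]
      congr 1
      simp only [dotProduct_add, dotProduct_sub, neg_dotProduct, dotProduct_neg, neg_neg]
      linear_combination -(p ⬝ᵥ q) * two_mul_half hd
    · rfl
  simp_rw [Fintype.sum_prod_type_right, hterm, Finset.sum_ite_irrel, sum_stdAddChar_dotProduct,
    Finset.sum_const_zero]
  rw [Finset.sum_eq_single (u - v), ← ite_and]
  · exact if_congr (by grind) rfl rfl
  · rintro q - hq
    rw [if_neg]
    rintro ⟨h, -⟩
    exact hq (by rw [h, add_sub_cancel_left])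
  · simp

end Weyl

section CharFun

variable [NeZero d]

lemma charFun_zero (A : Mat d n) : charFun d n A 0 = A.trace := by
  rw [charFun, neg_zero, weylP_zero, mul_one]

lemma charFun_sub (A B : Mat d n) (x : PhSp d n) :
    charFun d n (A - B) x = charFun d n A x - charFun d n B x := by
  rw [charFun, charFun, charFun, sub_mul, trace_sub]

lemma charFun_smul (c : ℂ) (A : Mat d n) (x : PhSp d n) :
    charFun d n (c • A) x = c * charFun d n A x := by
  rw [charFun, charFun, smul_mul, trace_smul, smul_eq_mul]

lemma charFun_sum {ι : Type*} (s : Finset ι) (A : ι → Mat d n) (x : PhSp d n) :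
    charFun d n (∑ i ∈ s, A i) x = ∑ i ∈ s, charFun d n (A i) x := by
  rw [charFun, Finset.sum_mul, trace_sum]
  rfl

lemma charFun_weylP (hd : Odd d) (x y : PhSp d n) :
    charFun d n (weylP d n x) y = if x = y then (d : ℂ) ^ n else 0 :=
  trace_weylP_mul_weylP_neg hd x y

lemma charFun_conjTranspose (hd : Odd d) (A : Mat d n) (x : PhSp d n) :
    charFun d n Aᴴ x = star (charFun d n A (-x)) := by
  rw [charFun, charFun, neg_neg, ← trace_conjTranspose, conjTranspose_mul,
    weylP_conjTranspose hd, trace_mul_comm]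

lemma norm_charFun_neg (hd : Odd d) {A : Mat d n} (hA : A.IsHermitian) (x : PhSp d n) :
    ‖charFun d n A (-x)‖ = ‖charFun d n A x‖ := by
  rw [← norm_star, ← charFun_conjTranspose hd, hA.eq]

lemma sum_charFun_smul_weylP (hd : Odd d) (A : Mat d n) :
    ∑ x : PhSp d n, charFun d n A x • weylP d n x = (d : ℂ) ^ n • A := by
  ext j k
  simp only [Matrix.sum_apply, Matrix.smul_apply, smul_eq_mul, charFun, trace, diag_apply,
    mul_apply, Finset.sum_mul]
  calc _ = ∑ u, ∑ v, A u v * ∑ x : PhSp d n, weylP d n x j k * weylP d n (-x) v u := by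
        rw [Finset.sum_comm]
        refine Finset.sum_congr rfl fun u _ => ?_
        rw [Finset.sum_comm]
        simp_rw [Finset.mul_sum]
        exact Finset.sum_congr rfl fun v _ => Finset.sum_congr rfl fun x _ => by ring
    _ = _ := by
        simp_rw [sum_weylP_apply_mul_weylP_neg_apply hd, mul_ite, mul_zero, ite_and]
        simp [Finset.sum_ite_eq, mul_comm]

lemma trace_mul_eq_sum_charFun (hd : Odd d) (A B : Mat d n) :
    (A * B).trace = ((d : ℂ) ^ n)⁻¹ * ∑ x, charFun d n A x * charFun d n B (-x) := by
  have hA : A = ((d : ℂ) ^ n)⁻¹ • ∑ x : PhSp d n, charFun d n A x • weylP d n x := by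
    rw [sum_charFun_smul_weylP hd, inv_smul_smul₀ (pow_ne_zero _ (NeZero.ne _))]
  conv_lhs => rw [hA]
  simp only [Matrix.smul_mul, Matrix.sum_mul, trace_smul, trace_sum, smul_eq_mul, charFun, neg_neg,
    trace_mul_comm (weylP d n _)]

lemma re_trace_conjTranspose_mul_self (hd : Odd d) (A : Mat d n) :
    ((Aᴴ * A).trace).re = ((d : ℝ) ^ n)⁻¹ * ∑ x, ‖charFun d n A x‖ ^ 2 := by
  have hterm : ∀ x,
      charFun d n Aᴴ x * charFun d n A (-x) = ((‖charFun d n A (-x)‖ ^ 2 : ℝ) : ℂ) := by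
    intro x
    rw [charFun_conjTranspose hd, ← starRingEnd_apply, Complex.conj_mul']
    push_cast
    rfl
  have hneg : ∑ x, ((‖charFun d n A (-x)‖ ^ 2 : ℝ) : ℂ) = ∑ x, ((‖charFun d n A x‖ ^ 2 : ℝ) : ℂ) :=
    Fintype.sum_equiv (Equiv.neg _) _ _ fun _ => rfl
  rw [trace_mul_eq_sum_charFun hd, Finset.sum_congr rfl fun x _ => hterm x, hneg,
    ← Complex.ofReal_sum, ← Complex.ofReal_natCast, ← Complex.ofReal_pow, ← Complex.ofReal_inv,
    ← Complex.ofReal_mul, Complex.ofReal_re]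

lemma charFun_meanState (hd : Odd d) (ρ : Mat d n) (y : PhSp d n) :
    charFun d n (meanState d n ρ) y = if ‖charFun d n ρ y‖ = 1 then charFun d n ρ y else 0 := by
  simp only [meanState, charFun_smul, charFun_sum, charFun_weylP hd, mul_ite, mul_zero,
    Finset.sum_ite_eq', Finset.mem_univ, if_true]
  rw [mul_comm _ ((d : ℂ) ^ n), inv_mul_cancel_left₀ (pow_ne_zero _ (NeZero.ne _))]

end CharFun

def rot (s t : ZMod d) (b : Idx d n × Idx d n) : Idx d n × Idx d n :=
  (s • b.1 + t • b.2, -(t • b.1) + s • b.2)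

lemma rot_add (s t : ZMod d) (b b' : Idx d n × Idx d n) :
    rot s t (b + b') = rot s t b + rot s t b' := by
  ext i <;> simp only [rot, Prod.fst_add, Prod.snd_add, Pi.add_apply, Pi.smul_apply, Pi.neg_apply,
    smul_eq_mul] <;> ring

lemma rot_leftInverse {s t : ZMod d} (hst : s ^ 2 + t ^ 2 = 1) :
    Function.LeftInverse (rot (n := n) s (-t)) (rot s t) := by
  intro b
  ext i <;> simp only [rot, Pi.add_apply, Pi.smul_apply, Pi.neg_apply, smul_eq_mul]
  · linear_combination b.1 i * hst
  · linear_combination b.2 i * hst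

lemma rot_smul_smul {s t : ZMod d} (hst : s ^ 2 + t ^ 2 = 1) (q : Idx d n) :
    rot s t (s • q, t • q) = (q, 0) := by
  ext i <;> simp only [rot, Pi.add_apply, Pi.smul_apply, Pi.neg_apply, smul_eq_mul, Pi.zero_apply]
  · linear_combination q i * hst
  · ring

lemma kron_eq_kronecker (A B : Mat d n) : kron d n A B = A ⊗ₖ B := rfl

section Convolution

variable [NeZero d]

lemma convU_apply (s t : ZMod d) (a b : Idx d n × Idx d n) :
    convU d n s t a b = if a = rot s t b then 1 else 0 := by
  simp only [convU, of_apply, rot, Prod.ext_iff]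

lemma conjTranspose_convU_mul_mul_convU (s t : ZMod d)
    (X : Matrix (Idx d n × Idx d n) (Idx d n × Idx d n) ℂ) :
    (convU d n s t)ᴴ * X * convU d n s t = X.submatrix (rot s t) (rot s t) := by
  ext b b'
  simp [mul_apply, convU_apply]

lemma conjTranspose_convU_mul_weylP_kronecker_one_mul_convU {s t : ZMod d}
    (hst : s ^ 2 + t ^ 2 = 1) (z : PhSp d n) :
    (convU d n s t)ᴴ * (weylP d n z ⊗ₖ 1) * convU d n s t =
      weylP d n (s • z) ⊗ₖ weylP d n (t • z) := by
  rw [conjTranspose_convU_mul_mul_convU]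
  ext b b'
  have hcond : rot s t b = rot s t b' + (z.2, 0) ↔ b = b' + (s • z.2, t • z.2) := by
    rw [← rot_smul_smul hst, ← rot_add, (rot_leftInverse hst).injective.eq_iff]
  simp only [submatrix_apply, kroneckerMap_apply, weylP_apply, one_apply, ite_zero_mul_ite_zero,
    mul_one]
  refine if_congr (by simpa [Prod.ext_iff] using hcond) ?_ rfl
  rw [← AddChar.map_add_eq_mul]
  congr 1
  simp only [rot, Prod.smul_fst, Prod.smul_snd, dotProduct_add, dotProduct_smul, smul_dotProduct,
    smul_eq_mul]
  linear_combination half d * (z.1 ⬝ᵥ z.2) * hst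

lemma charFun_qconv {s t : ZMod d} (hst : s ^ 2 + t ^ 2 = 1) (ρ σ : Mat d n) (x : PhSp d n) :
    charFun d n (qconv d n s t ρ σ) x = charFun d n ρ (s • x) * charFun d n σ (t • x) := by
  set U := convU d n s t
  have hcyc : ∀ X Y : Matrix (Idx d n × Idx d n) (Idx d n × Idx d n) ℂ,
      (U * X * Uᴴ * Y).trace = (X * (Uᴴ * Y * U)).trace := fun X Y => by
    rw [Matrix.mul_assoc, trace_mul_comm, ← Matrix.mul_assoc, ← Matrix.mul_assoc,
      ← Matrix.mul_assoc, trace_mul_comm]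
    simp only [Matrix.mul_assoc]
  rw [charFun, qconv, trace_partialTrace_mul, hcyc,
    conjTranspose_convU_mul_weylP_kronecker_one_mul_convU hst, kron_eq_kronecker,
    ← mul_kronecker_mul, trace_kronecker, smul_neg, smul_neg]
  rfl

lemma posSemidef_qconv (s t : ZMod d) {ρ σ : Mat d n} (hρ : ρ.PosSemidef) (hσ : σ.PosSemidef) :
    (qconv d n s t ρ σ).PosSemidef := by
  have hK := (hρ.kronecker hσ).mul_mul_conjTranspose_same (convU d n s t)
  have : qconv d n s t ρ σ =
      ∑ b, (convU d n s t * (ρ ⊗ₖ σ) * (convU d n s t)ᴴ).submatrix (·, b) (·, b) := by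
    ext a a'
    simp [qconv, Matrix.sum_apply, kron_eq_kronecker]
  rw [this]
  exact posSemidef_sum _ fun b _ => hK.submatrix _

lemma isState_qconv {s t : ZMod d} (hst : s ^ 2 + t ^ 2 = 1) {ρ σ : Mat d n} (hρ : IsState d n ρ)
    (hσ : IsState d n σ) : IsState d n (qconv d n s t ρ σ) := by
  refine ⟨posSemidef_qconv s t hρ.1 hσ.1, ?_⟩
  rw [← charFun_zero, charFun_qconv hst, smul_zero, smul_zero, charFun_zero, charFun_zero, hρ.2,
    hσ.2, mul_one]

lemma isState_boxPow {s t : ZMod d} (hst : s ^ 2 + t ^ 2 = 1) {ρ : Mat d n} (hρ : IsState d n ρ)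
    (m : ℕ) : IsState d n (boxPow d n s t ρ m) := by
  induction m with
  | zero => exact hρ
  | succ k ih => exact isState_qconv hst ih hρ

end Convolution

def unitSet [NeZero d] (ρ : Mat d n) : Finset (PhSp d n) :=
  Finset.univ.filter fun x => ‖charFun d n ρ x‖ = 1

section UnitSet

variable [NeZero d] {ρ : Mat d n} {x y : PhSp d n}

lemma mem_unitSet : x ∈ unitSet ρ ↔ ‖charFun d n ρ x‖ = 1 := by
  simp [unitSet]

lemma charFun_eq_one_of_mem_unitSet (hd : Odd d) (hzm : ZeroMean d n ρ) (hx : x ∈ unitSet ρ) :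
    charFun d n ρ x = 1 := by
  have hM := charFun_meanState hd ρ x
  rw [if_pos (mem_unitSet.mp hx)] at hM
  rcases hzm x with h | h
  · have := mem_unitSet.mp hx
    rw [← hM, h, norm_zero] at this
    exact absurd this zero_ne_one
  · rw [← hM, h]

lemma mul_weylP_neg_eq_self (hd : Odd d) {σ : Mat d n} (hσ : IsState d n σ)
    (h : charFun d n σ x = 1) : σ * weylP d n (-x) = σ :=
  hσ.1.mul_eq_self_of_trace_mul_eq_one hσ.2
    (by rw [weylP_conjTranspose hd, neg_neg, ← weylP_mul_weylP_neg hd (-x), neg_neg]) h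

lemma zero_mem_unitSet (hρ : IsState d n ρ) : 0 ∈ unitSet ρ := by
  simp [mem_unitSet, charFun_zero, hρ.2]

lemma neg_mem_unitSet (hd : Odd d) (hρ : IsState d n ρ) (hx : x ∈ unitSet ρ) : -x ∈ unitSet ρ := by
  rw [mem_unitSet, norm_charFun_neg hd hρ.1.1]
  exact mem_unitSet.mp hx

lemma add_mem_unitSet (hd : Odd d) (hρ : IsState d n ρ) (hzm : ZeroMean d n ρ)
    (hx : x ∈ unitSet ρ) (hy : y ∈ unitSet ρ) :
    x + y ∈ unitSet ρ ∧ stdAddChar (half d * symp x y) = 1 := by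
  have hsymp : symp (-x) (-y) = symp x y := by simp [symp]
  have hρxy : stdAddChar (half d * symp x y) • (ρ * weylP d n (-(x + y))) = ρ := by
    rw [← Matrix.mul_smul, ← hsymp, neg_add, ← weylP_mul hd, ← Matrix.mul_assoc,
      mul_weylP_neg_eq_self hd hρ (charFun_eq_one_of_mem_unitSet hd hzm hx),
      mul_weylP_neg_eq_self hd hρ (charFun_eq_one_of_mem_unitSet hd hzm hy)]
  have htr : stdAddChar (half d * symp x y) * charFun d n ρ (x + y) = 1 := by
    rw [charFun, ← smul_eq_mul, ← trace_smul, hρxy, hρ.2]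
  have hmem : x + y ∈ unitSet ρ := by
    have := congrArg norm htr
    rwa [norm_mul, ZMod.stdAddChar_apply, Circle.norm_coe, one_mul, norm_one, ← mem_unitSet] at this
  rw [charFun_eq_one_of_mem_unitSet hd hzm hmem, mul_one] at htr
  exact ⟨hmem, htr⟩

lemma symp_eq_zero_of_mem_unitSet (hd : Odd d) (hρ : IsState d n ρ) (hzm : ZeroMean d n ρ)
    (hx : x ∈ unitSet ρ) (hy : y ∈ unitSet ρ) : symp x y = 0 := by
  have h := (add_mem_unitSet hd hρ hzm hx hy).2
  rw [← AddChar.map_zero_eq_one (stdAddChar (N := d)), ZMod.injective_stdAddChar.eq_iff] at h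
  rw [← one_mul (symp x y), ← two_mul_half hd, mul_assoc, h, mul_zero]

lemma nsmul_mem_unitSet (hd : Odd d) (hρ : IsState d n ρ) (hzm : ZeroMean d n ρ)
    (hx : x ∈ unitSet ρ) (k : ℕ) : k • x ∈ unitSet ρ := by
  induction k with
  | zero => rw [zero_smul]; exact zero_mem_unitSet hρ
  | succ k ih => rw [succ_nsmul]; exact (add_mem_unitSet hd hρ hzm ih hx).1

lemma smul_mem_unitSet (hd : Odd d) (hρ : IsState d n ρ) (hzm : ZeroMean d n ρ)
    (hx : x ∈ unitSet ρ) (a : ZMod d) : a • x ∈ unitSet ρ := by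
  rw [← ZMod.natCast_zmod_val a, Nat.cast_smul_eq_nsmul]
  exact nsmul_mem_unitSet hd hρ hzm hx _

lemma smul_mem_unitSet_iff [Fact d.Prime] (hd : Odd d) (hρ : IsState d n ρ) (hzm : ZeroMean d n ρ)
    {a : ZMod d} (ha : a ≠ 0) : a • x ∈ unitSet ρ ↔ x ∈ unitSet ρ :=
  ⟨fun h => by simpa [inv_smul_smul₀ ha] using smul_mem_unitSet hd hρ hzm h a⁻¹,
    fun h => smul_mem_unitSet hd hρ hzm h a⟩

end UnitSet

def stabProj [NeZero d] (ρ : Mat d n) : Mat d n :=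
  ((unitSet ρ).card : ℂ)⁻¹ • ∑ x ∈ unitSet ρ, weylP d n x

section StabProj

variable [NeZero d] {ρ : Mat d n}

lemma card_unitSet_ne_zero (hρ : IsState d n ρ) : ((unitSet ρ).card : ℂ) ≠ 0 :=
  Nat.cast_ne_zero.mpr (Finset.card_ne_zero_of_mem (zero_mem_unitSet hρ))

lemma meanState_eq_smul_stabProj (hd : Odd d) (hρ : IsState d n ρ) (hzm : ZeroMean d n ρ) :
    meanState d n ρ = (((unitSet ρ).card : ℂ) / (d : ℂ) ^ n) • stabProj ρ := by
  have hM : meanState d n ρ = ((d : ℂ) ^ n)⁻¹ • ∑ x ∈ unitSet ρ, weylP d n x := by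
    rw [meanState, unitSet, Finset.sum_filter]
    congr 1
    refine Finset.sum_congr rfl fun x _ => ?_
    split_ifs with h
    · rw [charFun_eq_one_of_mem_unitSet hd hzm (mem_unitSet.mpr h), one_smul]
    · rw [zero_smul]
  rw [hM, stabProj, smul_smul, div_mul_eq_mul_div, mul_inv_cancel₀ (card_unitSet_ne_zero hρ),
    one_div]

lemma mul_stabProj_eq_self (hρ : IsState d n ρ) {A : Mat d n}
    (hA : ∀ x ∈ unitSet ρ, A * weylP d n x = A) : A * stabProj ρ = A := by
  rw [stabProj, Matrix.mul_smul, Matrix.mul_sum, Finset.sum_congr rfl hA, Finset.sum_const,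
    ← Nat.cast_smul_eq_nsmul ℂ, smul_smul, inv_mul_cancel₀ (card_unitSet_ne_zero hρ), one_smul]

lemma stabProj_mul_weylP (hd : Odd d) (hρ : IsState d n ρ) (hzm : ZeroMean d n ρ) {y : PhSp d n}
    (hy : y ∈ unitSet ρ) : stabProj ρ * weylP d n y = stabProj ρ := by
  rw [stabProj, Matrix.smul_mul, Matrix.sum_mul]
  congr 1
  have hxy : ∀ x ∈ unitSet ρ, weylP d n x * weylP d n y = weylP d n (x + y) := fun x hx => by
    rw [weylP_mul hd, symp_eq_zero_of_mem_unitSet hd hρ hzm hx hy, mul_zero,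
      AddChar.map_zero_eq_one, one_smul]
  rw [Finset.sum_congr rfl hxy]
  exact Finset.sum_nbij' (· + y) (· - y) (fun x hx => (add_mem_unitSet hd hρ hzm hx hy).1)
    (fun x hx => by
      simpa [sub_eq_add_neg] using (add_mem_unitSet hd hρ hzm hx (neg_mem_unitSet hd hρ hy)).1)
    (fun x _ => add_sub_cancel_right x y) (fun x _ => sub_add_cancel x y) (fun _ _ => rfl)

lemma isIdempotentElem_stabProj (hd : Odd d) (hρ : IsState d n ρ) (hzm : ZeroMean d n ρ) :
    IsIdempotentElem (stabProj ρ) :=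
  mul_stabProj_eq_self hρ fun _ hy => stabProj_mul_weylP hd hρ hzm hy

lemma trace_stabProj (hρ : IsState d n ρ) :
    (stabProj ρ).trace = (d : ℂ) ^ n / (unitSet ρ).card := by
  rw [stabProj, trace_smul, trace_sum, Finset.sum_congr rfl fun x _ => trace_weylP x,
    Finset.sum_ite_eq', if_pos (zero_mem_unitSet hρ), smul_eq_mul, inv_mul_eq_div]

lemma mrank_eq_rank_stabProj (hd : Odd d) (hρ : IsState d n ρ) (hzm : ZeroMean d n ρ) :
    mrank d n ρ = (stabProj ρ).rank := by
  rw [mrank, meanState_eq_smul_stabProj hd hρ hzm, rank_smul_of_mem_nonZeroDivisors _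
    (mem_nonZeroDivisors_of_ne_zero (div_ne_zero (card_unitSet_ne_zero hρ)
      (pow_ne_zero _ (Nat.cast_ne_zero.mpr (NeZero.ne d)))))]

lemma mrank_mul_card_unitSet (hd : Odd d) (hρ : IsState d n ρ) (hzm : ZeroMean d n ρ) :
    (mrank d n ρ : ℝ) * (unitSet ρ).card = (d : ℝ) ^ n := by
  have h := rank_eq_trace_of_isIdempotentElem (isIdempotentElem_stabProj hd hρ hzm)
  rw [trace_stabProj hρ, ← mrank_eq_rank_stabProj hd hρ hzm, eq_div_iff (card_unitSet_ne_zero hρ)]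
    at h
  exact_mod_cast h

end StabProj

lemma one_sub_magicGap_nonneg [NeZero d] (ρ : Mat d n) : 0 ≤ 1 - magicGap d n ρ := by
  rw [magicGap]
  split_ifs with h
  · rw [sub_sub_cancel]
    obtain ⟨x, hx⟩ := h
    exact (norm_nonneg _).trans (Finset.le_sup' (fun y => ‖charFun d n ρ y‖) hx)
  · norm_num

lemma norm_charFun_le_one_sub_magicGap [NeZero d] {ρ : Mat d n} {x : PhSp d n}
    (hx : x ∉ unitSet ρ) : ‖charFun d n ρ x‖ ≤ 1 - magicGap d n ρ := by
  by_cases hz : charFun d n ρ x = 0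
  · rw [hz, norm_zero]
    exact one_sub_magicGap_nonneg ρ
  · have hmem : x ∈ Finset.univ.filter
        fun y : PhSp d n => charFun d n ρ y ≠ 0 ∧ ‖charFun d n ρ y‖ ≠ 1 :=
      Finset.mem_filter.mpr ⟨Finset.mem_univ x, hz, fun h => hx (mem_unitSet.mpr h)⟩
    rw [magicGap, dif_pos ⟨x, hmem⟩, sub_sub_cancel]
    exact Finset.le_sup' (fun y => ‖charFun d n ρ y‖) hmem

section BoxPow

variable [Fact d.Prime] {s t : ZMod d} {ρ : Mat d n} {x : PhSp d n}

lemma charFun_boxPow_of_mem_unitSet (hd : Odd d) (hst : s ^ 2 + t ^ 2 = 1) (hρ : IsState d n ρ)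
    (hzm : ZeroMean d n ρ) (m : ℕ) (hx : x ∈ unitSet ρ) :
    charFun d n (boxPow d n s t ρ m) x = 1 := by
  induction m generalizing x with
  | zero => exact charFun_eq_one_of_mem_unitSet hd hzm hx
  | succ k ih =>
    rw [boxPow, charFun_qconv hst, ih (smul_mem_unitSet hd hρ hzm hx s),
      charFun_eq_one_of_mem_unitSet hd hzm (smul_mem_unitSet hd hρ hzm hx t), one_mul]

lemma norm_charFun_boxPow_le (hd : Odd d) (hs : s ≠ 0) (ht : t ≠ 0) (hst : s ^ 2 + t ^ 2 = 1)
    (hρ : IsState d n ρ) (hzm : ZeroMean d n ρ) (m : ℕ) (hx : x ∉ unitSet ρ) :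
    ‖charFun d n (boxPow d n s t ρ m) x‖ ≤
      (1 - magicGap d n ρ) ^ m * ‖charFun d n ρ (s ^ m • x)‖ := by
  induction m generalizing x with
  | zero => simp [boxPow]
  | succ k ih =>
    have hsx : s • x ∉ unitSet ρ := by rwa [smul_mem_unitSet_iff hd hρ hzm hs]
    have htx : t • x ∉ unitSet ρ := by rwa [smul_mem_unitSet_iff hd hρ hzm ht]
    rw [boxPow, charFun_qconv hst, norm_mul, pow_succ, pow_succ, mul_smul]
    calc _ ≤ (1 - magicGap d n ρ) ^ k * ‖charFun d n ρ (s ^ k • s • x)‖ * (1 - magicGap d n ρ) :=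
          mul_le_mul (ih hsx) (norm_charFun_le_one_sub_magicGap htx) (norm_nonneg _)
            (mul_nonneg (pow_nonneg (one_sub_magicGap_nonneg ρ) k) (norm_nonneg _))
      _ = _ := by ring

lemma boxPow_mul_stabProj (hd : Odd d) (hst : s ^ 2 + t ^ 2 = 1) (hρ : IsState d n ρ)
    (hzm : ZeroMean d n ρ) (m : ℕ) : boxPow d n s t ρ m * stabProj ρ = boxPow d n s t ρ m :=
  mul_stabProj_eq_self hρ fun x hx => by
    simpa using mul_weylP_neg_eq_self hd (isState_boxPow hst hρ m)
      (charFun_boxPow_of_mem_unitSet hd hst hρ hzm m (neg_mem_unitSet hd hρ hx))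

lemma rank_boxPow_sub_meanState_le (hd : Odd d) (hst : s ^ 2 + t ^ 2 = 1) (hρ : IsState d n ρ)
    (hzm : ZeroMean d n ρ) (m : ℕ) : (boxPow d n s t ρ m - meanState d n ρ).rank ≤ mrank d n ρ := by
  have hM : meanState d n ρ * stabProj ρ = meanState d n ρ := by
    rw [meanState_eq_smul_stabProj hd hρ hzm, Matrix.smul_mul,
      (isIdempotentElem_stabProj hd hρ hzm).eq]
  calc _ = ((boxPow d n s t ρ m - meanState d n ρ) * stabProj ρ).rank := by
        rw [Matrix.sub_mul, boxPow_mul_stabProj hd hst hρ hzm m, hM]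
    _ ≤ (stabProj ρ).rank := rank_mul_le_right _ _
    _ = mrank d n ρ := (mrank_eq_rank_stabProj hd hρ hzm).symm

end BoxPow

section HilbertSchmidt

variable [NeZero d] {ρ : Mat d n}

lemma re_trace_sub_meanState_sq (hd : Odd d) (hzm : ZeroMean d n ρ) {σ : Mat d n}
    (hσ : ∀ x ∈ unitSet ρ, charFun d n σ x = 1) :
    (((σ - meanState d n ρ)ᴴ * (σ - meanState d n ρ)).trace).re =
      ((d : ℝ) ^ n)⁻¹ * ∑ x ∈ (unitSet ρ)ᶜ, ‖charFun d n σ x‖ ^ 2 := by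
  rw [re_trace_conjTranspose_mul_self hd, ← Finset.sum_add_sum_compl (unitSet ρ),
    Finset.sum_eq_zero fun x hx => ?_, zero_add]
  · refine congrArg _ (Finset.sum_congr rfl fun x hx => ?_)
    rw [charFun_sub, charFun_meanState hd,
      if_neg fun h => Finset.mem_compl.mp hx (mem_unitSet.mpr h), sub_zero]
  · rw [charFun_sub, charFun_meanState hd, if_pos (mem_unitSet.mp hx), hσ x hx,
      charFun_eq_one_of_mem_unitSet hd hzm hx, sub_self, norm_zero, sq, mul_zero]

lemma mrank_mul_re_trace_sub_meanState_sq (hd : Odd d) (hρ : IsState d n ρ)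
    (hzm : ZeroMean d n ρ) :
    (mrank d n ρ : ℝ) * (((ρ - meanState d n ρ)ᴴ * (ρ - meanState d n ρ)).trace).re =
      purity ρ * mrank d n ρ - 1 := by
  have hpurity : purity ρ = ((d : ℝ) ^ n)⁻¹ *
      ((unitSet ρ).card + ∑ x ∈ (unitSet ρ)ᶜ, ‖charFun d n ρ x‖ ^ 2) := by
    rw [purity, show ρ * ρ = ρᴴ * ρ by rw [hρ.1.1.eq], re_trace_conjTranspose_mul_self hd,
      ← Finset.sum_add_sum_compl (unitSet ρ),
      Finset.sum_congr rfl fun x hx => by rw [mem_unitSet.mp hx, one_pow], Finset.sum_const,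
      nsmul_one]
  have hR : (mrank d n ρ : ℝ) * (unitSet ρ).card * ((d : ℝ) ^ n)⁻¹ = 1 := by
    rw [mrank_mul_card_unitSet hd hρ hzm,
      mul_inv_cancel₀ (pow_ne_zero _ (Nat.cast_ne_zero.mpr (NeZero.ne d)))]
  rw [re_trace_sub_meanState_sq hd hzm fun x hx => charFun_eq_one_of_mem_unitSet hd hzm hx,
    hpurity]
  linear_combination -hR

lemma re_trace_boxPow_sub_meanState_sq_le [Fact d.Prime] (hd : Odd d) {s t : ZMod d} (hs : s ≠ 0)
    (ht : t ≠ 0) (hst : s ^ 2 + t ^ 2 = 1) (hρ : IsState d n ρ) (hzm : ZeroMean d n ρ) (m : ℕ) :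
    (((boxPow d n s t ρ m - meanState d n ρ)ᴴ * (boxPow d n s t ρ m - meanState d n ρ)).trace).re ≤
      ((1 - magicGap d n ρ) ^ m) ^ 2 *
        (((ρ - meanState d n ρ)ᴴ * (ρ - meanState d n ρ)).trace).re := by
  have ha : s ^ m ≠ 0 := pow_ne_zero m hs
  have hsum : ∑ x ∈ (unitSet ρ)ᶜ, ‖charFun d n ρ (s ^ m • x)‖ ^ 2 =
      ∑ x ∈ (unitSet ρ)ᶜ, ‖charFun d n ρ x‖ ^ 2 :=
    Finset.sum_nbij' (s ^ m • ·) ((s ^ m)⁻¹ • ·)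
      (fun x hx => by simpa [smul_mem_unitSet_iff hd hρ hzm ha] using hx)
      (fun x hx => by simpa [smul_mem_unitSet_iff hd hρ hzm (inv_ne_zero ha)] using hx)
      (fun x _ => inv_smul_smul₀ ha x) (fun x _ => smul_inv_smul₀ ha x) (fun _ _ => rfl)
  rw [re_trace_sub_meanState_sq hd hzm fun x hx => charFun_eq_one_of_mem_unitSet hd hzm hx,
    re_trace_sub_meanState_sq hd hzm fun x hx => charFun_boxPow_of_mem_unitSet hd hst hρ hzm m hx,
    mul_left_comm, ← hsum]
  refine mul_le_mul_of_nonneg_left ?_ (by positivity)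
  rw [Finset.mul_sum]
  refine Finset.sum_le_sum fun x hx => ?_
  rw [← mul_pow]
  exact pow_le_pow_left₀ (norm_nonneg _)
    (norm_charFun_boxPow_le hd hs ht hst hρ hzm m (Finset.mem_compl.mp hx)) 2

end HilbertSchmidt

theorem qCLT_traceDistance_general (d n : ℕ) [Fact (Nat.Prime d)] (hd : Odd d)
    (s t : ZMod d) (hs : s ≠ 0) (ht : t ≠ 0) (hst : s ^ 2 + t ^ 2 = 1)
    (ρ : Mat d n) (hρ : IsState d n ρ) (hzm : ZeroMean d n ρ) (N : ℕ) :
    traceNorm (boxPow d n s t ρ (N - 1) - meanState d n ρ) ≤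
      Real.sqrt 2 * (1 - magicGap d n ρ) ^ (N - 1) *
        Real.sqrt (purity ρ * (mrank d n ρ : ℝ) - 1) := by
  set A := boxPow d n s t ρ (N - 1) - meanState d n ρ
  set g := (1 - magicGap d n ρ) ^ (N - 1)
  set F := (((ρ - meanState d n ρ)ᴴ * (ρ - meanState d n ρ)).trace).re
  have hg : 0 ≤ g := pow_nonneg (one_sub_magicGap_nonneg ρ) _
  have hrank : (A.rank : ℝ) ≤ mrank d n ρ := by
    exact_mod_cast rank_boxPow_sub_meanState_le hd hst hρ hzm _
  have hfrob : (Aᴴ * A).trace.re ≤ g ^ 2 * F :=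
    re_trace_boxPow_sub_meanState_sq_le hd hs ht hst hρ hzm _
  calc traceNorm A ≤ √(A.rank : ℝ) * √((Aᴴ * A).trace.re) :=
        traceNorm_le_sqrt_rank_mul_sqrt_trace A
    _ ≤ √(mrank d n ρ : ℝ) * √(g ^ 2 * F) := by gcongr
    _ = 1 * g * √(purity ρ * mrank d n ρ - 1) := by
        rw [Real.sqrt_mul (sq_nonneg g), Real.sqrt_sq hg,
          ← mrank_mul_re_trace_sub_meanState_sq hd hρ hzm, Real.sqrt_mul (Nat.cast_nonneg _)]
        ring
    _ ≤ √2 * g * √(purity ρ * mrank d n ρ - 1) := by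
        gcongr
        exact Real.one_le_sqrt.mpr one_le_two

/-- **Trace-distance quantum CLT.** For every `n`-qudit state `ρ` with zero mean
(`d` an odd prime) and every `N ≥ 1`,
`‖⊠^N ρ − M(ρ)‖₁ ≤ √2 (1−MG(ρ))^{N−1} √(Tr(ρ²) R(ρ) − 1)`. -/
theorem qCLT_traceDistance (d n : ℕ) [Fact (Nat.Prime d)] (hd : Odd d) (hn : 1 ≤ n)
    (s t : ZMod d) (hs : s ≠ 0) (ht : t ≠ 0) (hst : s ^ 2 + t ^ 2 = 1)
    (ρ : Mat d n) (hρ : IsState d n ρ) (hzm : ZeroMean d n ρ) (N : ℕ) (hN : 1 ≤ N) :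
    traceNorm (boxPow d n s t ρ (N - 1) - meanState d n ρ) ≤
      Real.sqrt 2 * (1 - magicGap d n ρ) ^ (N - 1) *
        Real.sqrt (purity ρ * (mrank d n ρ : ℝ) - 1) :=
  qCLT_traceDistance_general d n hd s t hs ht hst ρ hρ hzm N

end QW
end
end

section
/- Convolutional strong subadditivity for diagonal states: let d be an odd prime and s,t,l,m ∈ ℤ_d ∖ {0} satisfy s² + t² ≡ 1, s ≡ t, l² + m² ≡ 1, and m ≡ l·s (mod d). If ρ, σ, τ are n-qudit states that are all diagonal in the computational basis, then S((ρ ⊠_{s,t} τ) ⊠_{l,m} σ) + S(σ) ≤ S(ρ ⊠_{s,t} σ) + S(σ ⊠_{s,t} τ). -/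
open scoped BigOperators ENNReal
open Classical Matrix ComplexOrder

noncomputable section

/-!
Diagonal states are classical: such a state is a probability vector on `G = ℤ_d^n`, and
`U_{s,t}` permutes the computational basis by the rotation `(x, y) ↦ (s x + t y, -t x + s y)`,
so `ρ ⊠_{s,t} σ` is again diagonal, with distribution `a ↦ ∑_b p(s a - t b) q(t a + s b)`.
For `s = t` this is the law of `X + Y` precomposed with `a ↦ 2s a`, and `m = l s` makes the
iterated convolution the law of `X + Y + Z` precomposed with an invertible scaling, which does
not change entropy. What remains is `H(X+Y+Z) + H(Y) ≤ H(X+Y) + H(Y+Z)` for independent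
`X, Y, Z`, i.e. strong subadditivity `H(A,B,C) + H(C) ≤ H(A,C) + H(B,C)` of Shannon entropy
for `A = X`, `B = X + Y`, `C = X + Y + Z`.
-/

namespace QW

open Real

section Shannon

variable {ι A B C : Type*} [Fintype ι] [Fintype A] [Fintype B] [Fintype C]

def shannonEntropy (p : ι → ℝ) : ℝ := ∑ i, negMulLog (p i)

theorem negMulLog_add_mul_log_le {a b : ℝ} (ha : 0 ≤ a) (hb : 0 ≤ b) (hab : b = 0 → a = 0) :
    negMulLog a + a * log b ≤ b - a := by
  rcases ha.eq_or_lt with rfl | ha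
  · simpa using hb
  have hb : 0 < b := hb.lt_of_ne fun h => ha.ne' (hab h.symm)
  have := mul_le_mul_of_nonneg_left (log_le_sub_one_of_pos (div_pos hb ha)) ha.le
  rw [log_div hb.ne' ha.ne', mul_sub, mul_sub, mul_div_cancel₀ _ ha.ne', mul_one] at this
  rw [negMulLog]
  linarith

theorem sum_negMulLog_le_neg_sum_mul_log {a b : ι → ℝ} (ha : ∀ i, 0 ≤ a i)
    (hb : ∀ i, 0 ≤ b i) (hab : ∀ i, b i = 0 → a i = 0) (hsum : ∑ i, b i ≤ ∑ i, a i) :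
    ∑ i, negMulLog (a i) ≤ -∑ i, a i * log (b i) := by
  have := Finset.sum_le_sum fun i (_ : i ∈ Finset.univ) =>
    negMulLog_add_mul_log_le (ha i) (hb i) (hab i)
  rw [Finset.sum_add_distrib, Finset.sum_sub_distrib] at this
  linarith

theorem negMulLog_sum_add_sum_negMulLog_le (f : A → B → ℝ) (hf : ∀ a b, 0 ≤ f a b) :
    negMulLog (∑ a, ∑ b, f a b) + ∑ a, ∑ b, negMulLog (f a b) ≤
      ∑ a, negMulLog (∑ b, f a b) + ∑ b, negMulLog (∑ a, f a b) := by
  set m := ∑ a, ∑ b, f a b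
  set fA := fun a => ∑ b, f a b
  set fB := fun b => ∑ a, f a b
  have hfA : ∀ a, 0 ≤ fA a := fun a => Finset.sum_nonneg fun b _ => hf a b
  have hpos : ∀ a b, 0 < f a b → 0 < fA a ∧ 0 < fB b ∧ 0 < m := fun a b h => by
    have h1 := h.trans_le (Finset.single_le_sum (fun b _ => hf a b) (Finset.mem_univ b))
    refine ⟨h1, h.trans_le ?_, h1.trans_le ?_⟩
    · exact Finset.single_le_sum (f := (f · b)) (fun a _ => hf a b) (Finset.mem_univ a)
    · exact Finset.single_le_sum (f := fA) (fun a _ => hfA a) (Finset.mem_univ a)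
  -- compare `f` with the product of its marginals, rescaled to the same mass
  let g : A × B → ℝ := fun x => fA x.1 * fB x.2 / m
  have hlog : ∀ a b, f a b * log (g (a, b)) =
      f a b * log (fA a) + f a b * log (fB b) - f a b * log m := by
    intro a b
    rcases (hf a b).eq_or_lt with h | h
    · simp [← h]
    obtain ⟨h1, h2, h3⟩ := hpos a b h
    rw [log_div (mul_pos h1 h2).ne' h3.ne', log_mul h1.ne' h2.ne']
    ring
  have hmass : ∑ x, g x = ∑ x : A × B, f x.1 x.2 := by
    simp only [g, Fintype.sum_prod_type, ← Finset.sum_div, ← Finset.sum_mul, ← Finset.mul_sum]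
    rw [show ∑ b, fB b = m from Finset.sum_comm]
    exact mul_self_div_self m
  have gibbs := sum_negMulLog_le_neg_sum_mul_log (a := fun x : A × B => f x.1 x.2) (b := g)
    (fun x => hf x.1 x.2)
    (fun x => div_nonneg (mul_nonneg (hfA x.1) (Finset.sum_nonneg fun a _ => hf a x.2))
      (Finset.sum_nonneg fun a _ => hfA a))
    (fun x hx => ((hf x.1 x.2).eq_or_lt.resolve_right fun h =>
      have ⟨h1, h2, h3⟩ := hpos x.1 x.2 h
      (div_pos (mul_pos h1 h2) h3).ne' hx).symm)
    hmass.le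
  have hB : ∑ a, ∑ b, f a b * log (fB b) = -∑ b, negMulLog (fB b) := by
    rw [Finset.sum_comm]
    simp [negMulLog, ← Finset.sum_mul, fB]
  simp only [Fintype.sum_prod_type, hlog, Finset.sum_sub_distrib, Finset.sum_add_distrib, hB]
    at gibbs
  simp only [negMulLog, neg_mul, Finset.sum_neg_distrib, ← Finset.sum_mul, fA, fB, m] at gibbs ⊢
  linarith

theorem sum_negMulLog_submodular (f : A → B → C → ℝ) (hf : ∀ a b c, 0 ≤ f a b c) :
    ∑ c, negMulLog (∑ a, ∑ b, f a b c) + ∑ c, ∑ a, ∑ b, negMulLog (f a b c) ≤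
      ∑ c, ∑ a, negMulLog (∑ b, f a b c) + ∑ c, ∑ b, negMulLog (∑ a, f a b c) := by
  simpa only [← Finset.sum_add_distrib] using Finset.sum_le_sum fun c _ =>
    negMulLog_sum_add_sum_negMulLog_le (fun a b => f a b c) fun a b => hf a b c

end Shannon

section AddConv

variable {ι G : Type*} [Fintype ι] [AddCommGroup G] [Fintype G]

def addConv (p q : G → ℝ) (x : G) : ℝ := ∑ y, p y * q (x - y)

theorem sum_addConv (p q : G → ℝ) : ∑ x, addConv p q x = (∑ x, p x) * ∑ x, q x := by
  simp only [addConv]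
  rw [Finset.sum_comm, Finset.sum_mul]
  refine Finset.sum_congr rfl fun y _ => ?_
  rw [← Finset.mul_sum, Fintype.sum_equiv (Equiv.subRight y) (fun x => q (x - y)) q fun _ => rfl]

theorem addConv_comm (p q : G → ℝ) : addConv p q = addConv q p := by
  ext x
  refine Fintype.sum_equiv (Equiv.subLeft x) _ _ fun y => ?_
  simp only [Equiv.subLeft_apply, sub_sub_cancel, mul_comm]

theorem sum_mul_mul_sub_eq_mul_addConv (p q r : G → ℝ) (x y : G) :
    ∑ z, p x * q (z - x) * r (y - z) = p x * addConv q r (y - x) := by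
  rw [addConv, Finset.mul_sum]
  refine Fintype.sum_equiv (Equiv.subRight x) _ _ fun z => ?_
  simp only [Equiv.subRight_apply, sub_sub, add_sub_cancel, mul_assoc]

theorem addConv_assoc (p q r : G → ℝ) : addConv (addConv p q) r = addConv p (addConv q r) := by
  ext x
  simp only [addConv, Finset.sum_mul]
  rw [Finset.sum_comm]
  exact Finset.sum_congr rfl fun y _ => sum_mul_mul_sub_eq_mul_addConv p q r y x

theorem sum_sum_negMulLog_mul_sub (f : ι → ℝ) (g : G → ℝ) (k : ι → G)
    (hg : ∑ y, g y = 1) :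
    ∑ y, ∑ i, negMulLog (f i * g (y - k i)) =
      shannonEntropy f + (∑ i, f i) * shannonEntropy g := by
  rw [Finset.sum_comm, shannonEntropy, shannonEntropy, Finset.sum_mul, ← Finset.sum_add_distrib]
  refine Finset.sum_congr rfl fun i _ => ?_
  rw [Fintype.sum_equiv (Equiv.subRight (k i)) (fun y => negMulLog (f i * g (y - k i)))
    (fun y => negMulLog (f i * g y)) fun _ => rfl]
  simp only [negMulLog_mul, Finset.sum_add_distrib, ← Finset.sum_mul, ← Finset.mul_sum, hg,
    one_mul]

theorem shannonEntropy_addConv_addConv_add_le {p q r : G → ℝ} (hp : p ∈ stdSimplex ℝ G)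
    (hq : q ∈ stdSimplex ℝ G) (hr : r ∈ stdSimplex ℝ G) :
    shannonEntropy (addConv (addConv p q) r) + shannonEntropy q ≤
      shannonEntropy (addConv p q) + shannonEntropy (addConv q r) := by
  -- strong subadditivity for the joint law of `(X, X + Y, X + Y + Z)`
  have ssa := sum_negMulLog_submodular (fun a b c => p a * q (b - a) * r (c - b))
    fun a b c => mul_nonneg (mul_nonneg (hp.1 a) (hq.1 _)) (hr.1 _)
  have hpq : ∑ x, addConv p q x = 1 := by rw [sum_addConv, hp.2, hq.2, one_mul]
  have hqr : ∑ x, addConv q r x = 1 := by rw [sum_addConv, hq.2, hr.2, one_mul]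
  have hXYZ : ∑ c, negMulLog (∑ a, ∑ b, p a * q (b - a) * r (c - b)) =
      shannonEntropy (addConv (addConv p q) r) := by
    simp only [shannonEntropy, addConv, Finset.sum_mul]
    exact Finset.sum_congr rfl fun c _ => congrArg _ Finset.sum_comm
  have hjoint : ∑ c, ∑ a, ∑ b, negMulLog (p a * q (b - a) * r (c - b)) =
      shannonEntropy p + shannonEntropy q + shannonEntropy r := by
    have hpair := sum_sum_negMulLog_mul_sub p q (fun a => a) hq.2
    rw [hp.2, one_mul, ← Fintype.sum_prod_type_right'] at hpair
    have hmass : ∑ x : G × G, p x.1 * q (x.2 - x.1) = 1 := by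
      rw [Fintype.sum_prod_type_right]
      exact hpq
    have htriple := sum_sum_negMulLog_mul_sub (fun x : G × G => p x.1 * q (x.2 - x.1)) r Prod.snd
      hr.2
    rw [hmass, one_mul, shannonEntropy, hpair] at htriple
    simpa only [Fintype.sum_prod_type] using htriple
  have hXYZ_X : ∑ c, ∑ a, negMulLog (∑ b, p a * q (b - a) * r (c - b)) =
      shannonEntropy p + shannonEntropy (addConv q r) := by
    have h := sum_sum_negMulLog_mul_sub p (addConv q r) (fun a => a) hqr
    rw [hp.2, one_mul] at h
    simp only [sum_mul_mul_sub_eq_mul_addConv]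
    exact h
  have hXYZ_XY : ∑ c, ∑ b, negMulLog (∑ a, p a * q (b - a) * r (c - b)) =
      shannonEntropy (addConv p q) + shannonEntropy r := by
    have h := sum_sum_negMulLog_mul_sub (addConv p q) r (fun a => a) hr.2
    rw [hpq, one_mul] at h
    simp only [← Finset.sum_mul]
    exact h
  linarith

end AddConv

theorem sum_comp_smul {K V β : Type*} [Field K] [AddCommGroup V] [Module K V] [Fintype V]
    [AddCommMonoid β] {k : K} (hk : k ≠ 0) (F : V → β) : ∑ x, F (k • x) = ∑ x, F x :=
  Fintype.sum_bijective _ (smul_right_injective V hk).bijective_of_finite _ _ fun _ => rfl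

section Rotation

variable {R M : Type*} [CommRing R] [AddCommGroup M] [Module R M]

def rotationPerm (s t : R) (h : s ^ 2 + t ^ 2 = 1) : Equiv.Perm (M × M) where
  toFun x := (s • x.1 + t • x.2, -(t • x.1) + s • x.2)
  invFun x := (s • x.1 - t • x.2, t • x.1 + s • x.2)
  left_inv x := by
    ext <;> simp only [smul_add, smul_neg, smul_smul] <;> match_scalars <;>
      first | ring1 | linear_combination h
  right_inv x := by
    ext <;> simp only [smul_add, smul_sub, smul_smul] <;> match_scalars <;>
      first | ring1 | linear_combination h

end Rotation

theorem permMatrix_mul_mul_conjTranspose {n R : Type*} [Fintype n] [DecidableEq n]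
    [NonAssocSemiring R] [StarRing R] (σ : Equiv.Perm n) (K : Matrix n n R) :
    σ.permMatrix R * K * (σ.permMatrix R)ᴴ = K.submatrix σ σ := by
  rw [conjTranspose_permMatrix, PEquiv.toMatrix_toPEquiv_mul, PEquiv.mul_toMatrix_toPEquiv,
    submatrix_submatrix]
  rfl

section QuantumConvolution

variable {d n : ℕ}

theorem kron_diagonal (p q : Idx d n → ℂ) :
    kron d n (diagonal p) (diagonal q) = diagonal fun x => p x.1 * q x.2 := by
  ext x y
  simp only [kron, of_apply, diagonal_apply, Prod.ext_iff]
  split_ifs <;> simp_all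

variable [NeZero d]

theorem convU_eq_permMatrix {s t : ZMod d} (h : s ^ 2 + t ^ 2 = 1) :
    convU d n s t = (rotationPerm s t h)⁻¹.permMatrix ℂ := by
  ext a b
  simp only [convU, of_apply, PEquiv.toMatrix_apply, Equiv.toPEquiv_apply, Option.mem_def,
    Option.some_inj, Equiv.Perm.inv_def, Equiv.symm_apply_eq, Prod.ext_iff]
  rfl

theorem qconv_diagonal {s t : ZMod d} (h : s ^ 2 + t ^ 2 = 1) (p q : Idx d n → ℂ) :
    qconv d n s t (diagonal p) (diagonal q) =
      diagonal fun a => ∑ b, p (s • a - t • b) * q (t • a + s • b) := by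
  ext a a'
  rw [qconv, of_apply, convU_eq_permMatrix h, permMatrix_mul_mul_conjTranspose, kron_diagonal,
    submatrix_diagonal_equiv]
  by_cases ha : a = a'
  · subst ha
    simp [rotationPerm, Equiv.Perm.inv_def]
  · simp [ha]

end QuantumConvolution

theorem entropy_diagonal_ofReal {I : Type} [Fintype I] [DecidableEq I] (p : I → ℝ) :
    entropy (diagonal fun i => (p i : ℂ)) = shannonEntropy p := by
  have h : (diagonal fun i => (p i : ℂ)).IsHermitian :=
    isHermitian_diagonal_iff.mpr fun i => Complex.conj_ofReal (p i)
  have hroots := h.roots_charpoly_eq_eigenvalues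
  rw [charpoly_diagonal, Polynomial.roots_prod _ _ (Finset.prod_ne_zero_iff.mpr
    fun i _ => Polynomial.X_sub_C_ne_zero _)] at hroots
  simp only [Polynomial.roots_X_sub_C, Multiset.bind_singleton] at hroots
  have heig : Finset.univ.val.map h.eigenvalues = Finset.univ.val.map p :=
    Multiset.map_injective Complex.ofReal_injective <| by
      rw [Multiset.map_map, Multiset.map_map]
      exact hroots.symm
  have hsum : ∑ i, negMulLog (h.eigenvalues i) = shannonEntropy p := by
    simpa only [Multiset.map_map, Function.comp_def, ← Finset.sum_eq_multiset_sum,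
      shannonEntropy] using congrArg (fun s => (s.map negMulLog).sum) heig
  rw [entropy, dif_pos h, ← hsum, ← Finset.sum_neg_distrib]
  simp only [negMulLog, neg_mul]

theorem exists_eq_diagonal_of_isDiag {I : Type*} [Fintype I] [DecidableEq I]
    {A : Matrix I I ℂ} (hA : A.PosSemidef) (htr : A.trace = 1) (hd : A.IsDiag) :
    ∃ p ∈ stdSimplex ℝ I, A = diagonal fun i => (p i : ℂ) := by
  refine ⟨fun i => (A i i).re, ⟨fun i => ?_, ?_⟩, ?_⟩
  · exact (Complex.le_def.mp hA.diag_nonneg).1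
  · simpa [Matrix.trace, Complex.re_sum] using congrArg Complex.re htr
  · ext i j
    by_cases hij : i = j
    · subst hij
      rw [diagonal_apply_eq]
      exact (hA.1.coe_re_apply_self i).symm
    · rw [diagonal_apply_ne _ hij, hd hij]

section Diagonal

variable {d n : ℕ} [Fact d.Prime]

theorem qconv_diagonal_comp_smul {s t c : ZMod d} (h : s ^ 2 + t ^ 2 = 1) (hs : s ≠ 0)
    (hct : c * t = s) (p q : Idx d n → ℝ) :
    qconv d n s t (diagonal fun a => (p (c • a) : ℂ)) (diagonal fun a => (q a : ℂ)) =
      diagonal fun a => (addConv p q ((c * s + t) • a) : ℂ) := by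
  rw [qconv_diagonal h]
  refine congrArg diagonal (funext fun a => ?_)
  have key : ∑ b, p (c • (s • a - t • b)) * q (t • a + s • b) =
      addConv p q ((c * s + t) • a) :=
    calc ∑ b, p (c • (s • a - t • b)) * q (t • a + s • b)
        = ∑ b, p ((c * s) • a - s • b) * q (t • a + s • b) := by
          simp only [smul_sub, smul_smul, hct]
      _ = ∑ y, p ((c * s) • a - y) * q (t • a + y) :=
          sum_comp_smul hs fun y => p ((c * s) • a - y) * q (t • a + y)
      _ = addConv p q ((c * s + t) • a) := by
          refine Fintype.sum_equiv (Equiv.subLeft ((c * s) • a)) _ _ fun y => ?_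
          simp only [Equiv.subLeft_apply, add_smul]
          congr 2
          abel
  exact_mod_cast key

theorem entropy_diagonal_comp_smul {k : ZMod d} (hk : k ≠ 0) (p : Idx d n → ℝ) :
    entropy (diagonal fun a => (p (k • a) : ℂ)) = shannonEntropy p := by
  rw [entropy_diagonal_ofReal (fun a => p (k • a)), shannonEntropy, shannonEntropy,
    sum_comp_smul hk fun a => negMulLog (p a)]

end Diagonal

theorem convSSA_diagonal_general (d n : ℕ) [Fact (Nat.Prime d)]
    (s t l m : ZMod d) (hs : s ≠ 0) (hl : l ≠ 0)
    (hst : s ^ 2 + t ^ 2 = 1) (hseqt : s = t)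
    (hlm : l ^ 2 + m ^ 2 = 1) (hmls : m = l * s)
    (ρ σ τ : Mat d n) (hρ : IsState d n ρ) (hσ : IsState d n σ) (hτ : IsState d n τ)
    (hρd : ρ.IsDiag) (hσd : σ.IsDiag) (hτd : τ.IsDiag) :
    entropy (qconv d n l m (qconv d n s t ρ τ) σ) + entropy σ ≤
      entropy (qconv d n s t ρ σ) + entropy (qconv d n s t σ τ) := by
  subst hseqt hmls
  obtain ⟨p, hp, rfl⟩ := exists_eq_diagonal_of_isDiag hρ.1 hρ.2 hρd
  obtain ⟨q, hq, rfl⟩ := exists_eq_diagonal_of_isDiag hσ.1 hσ.2 hσd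
  obtain ⟨r, hr, rfl⟩ := exists_eq_diagonal_of_isDiag hτ.1 hτ.2 hτd
  have h2s : (s + s) * s = 1 := by linear_combination hst
  have h3 : ((s + s) * l + l * s) * (l * s) = 1 := by linear_combination l ^ 2 * hst + hlm
  have hconv : ∀ f g : Idx d n → ℝ, qconv d n s s (diagonal fun a => (f a : ℂ))
      (diagonal fun a => (g a : ℂ)) = diagonal fun a => (addConv f g ((s + s) • a) : ℂ) := by
    simpa only [one_smul, one_mul] using qconv_diagonal_comp_smul hst hs (one_mul s)
  rw [hconv, hconv, hconv, qconv_diagonal_comp_smul hlm hl (by linear_combination l * hst),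
    entropy_diagonal_comp_smul (left_ne_zero_of_mul_eq_one h3),
    entropy_diagonal_comp_smul (left_ne_zero_of_mul_eq_one h2s),
    entropy_diagonal_comp_smul (left_ne_zero_of_mul_eq_one h2s), entropy_diagonal_ofReal,
    addConv_assoc, addConv_comm r q, ← addConv_assoc]
  exact shannonEntropy_addConv_addConv_add_le hp hq hr

/-- **Convolutional strong subadditivity for diagonal states.** If `ρ, σ, τ` are
diagonal in the computational basis, then
`S((ρ ⊠_{s,t} τ) ⊠_{l,m} σ) + S(σ) ≤ S(ρ ⊠_{s,t} σ) + S(σ ⊠_{s,t} τ)`,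
where `s² + t² ≡ 1`, `s ≡ t`, `l² + m² ≡ 1`, `m ≡ l·s (mod d)`. -/
theorem convSSA_diagonal (d n : ℕ) [Fact (Nat.Prime d)] (hd : Odd d) (hn : 1 ≤ n)
    (s t l m : ZMod d) (hs : s ≠ 0) (ht : t ≠ 0) (hl : l ≠ 0) (hm : m ≠ 0)
    (hst : s ^ 2 + t ^ 2 = 1) (hseqt : s = t)
    (hlm : l ^ 2 + m ^ 2 = 1) (hmls : m = l * s)
    (ρ σ τ : Mat d n) (hρ : IsState d n ρ) (hσ : IsState d n σ) (hτ : IsState d n τ)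
    (hρd : ρ.IsDiag) (hσd : σ.IsDiag) (hτd : τ.IsDiag) :
    entropy (qconv d n l m (qconv d n s t ρ τ) σ) + entropy σ ≤
      entropy (qconv d n s t ρ σ) + entropy (qconv d n s t σ τ) :=
  convSSA_diagonal_general d n s t l m hs hl hst hseqt hlm hmls ρ σ τ hρ hσ hτ hρd hσd hτd

end QW
end
end

section
/- No subadditivity or superadditivity of entropy under quantum convolution: for every odd prime d and every n ≥ 1, (1) there exist n-qudit states ρ, σ with S(ρ ⊠ σ) > S(ρ) + S(σ) — indeed ρ the projection onto |0⟩^{⊗n} and σ the projection onto the uniform superposition d^{−n/2} Σ_{k⃗∈ℤ_d^n} |k⃗⟩ satisfy S(ρ) = S(σ) = 0 and ρ ⊠ σ = d^{−n} I, so S(ρ ⊠ σ) = n log d; and (2) there exist n-qudit states ρ, σ with S(ρ ⊠ σ) < S(ρ) + S(σ) — indeed ρ = σ = d^{−n} I satisfy S(ρ ⊠ σ) = n log d < 2n log d. -/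
open scoped BigOperators ENNReal
open Classical Matrix ComplexOrder

noncomputable section

/-!
Since `s² + t² = 1`, the rotation `(i, j) ↦ (s i + t j, -t i + s j)` permuting the basis in
`U_{s,t}` is inverted by its transpose, so
`(ρ ⊠ σ)_{a a'} = ∑_b ρ_{sa-tb, sa'-tb} σ_{ta+sb, ta'+sb}`.
For `ρ = |0⟩⟨0|` only `b = t⁻¹ s a` contributes, so `|0⟩⟨0| ⊠ σ` is the rescaled diagonal of `σ`,
which for the uniform superposition `σ` is the maximally mixed state `d⁻ⁿ I`; and `d⁻ⁿ I` is a fixed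
point of `⊠`. Projections have entropy `0` (their eigenvalues are `0` and `1`), while `d⁻ⁿ I` has
entropy `n log d > 0`.
-/

namespace QW

def uniformProj (I : Type) [Fintype I] : Matrix I I ℂ :=
  Matrix.of fun _ _ => (Fintype.card I : ℂ)⁻¹

def maximallyMixed (I : Type) [Fintype I] [DecidableEq I] : Matrix I I ℂ :=
  (Fintype.card I : ℂ)⁻¹ • 1

section Projections

variable {I : Type} [Fintype I]

open scoped MatrixOrder in
lemma posSemidef_of_isStarProjection {ρ : Matrix I I ℂ} (hρ : IsStarProjection ρ) :
    ρ.PosSemidef :=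
  hρ.nonneg.posSemidef

lemma isStarProjection_uniformProj [Nonempty I] : IsStarProjection (uniformProj I) := by
  refine ⟨?_, ?_⟩
  · ext x y
    simp [uniformProj, Matrix.mul_apply]
  · ext x y
    simp [uniformProj]

lemma trace_uniformProj [Nonempty I] : (uniformProj I).trace = 1 := by
  simp [uniformProj, Matrix.trace]

variable [DecidableEq I]

lemma isStarProjection_single_one (i : I) : IsStarProjection (Matrix.single i i (1 : ℂ)) :=
  ⟨by simp [IsIdempotentElem], by simp [IsSelfAdjoint, star_eq_conjTranspose]⟩

lemma entropy_eq_zero_of_isStarProjection {ρ : Matrix I I ℂ} (hρ : IsStarProjection ρ) :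
    entropy ρ = 0 := by
  have h : ρ.IsHermitian := hρ.isSelfAdjoint
  rw [entropy, dif_pos h, neg_eq_zero]
  refine Finset.sum_eq_zero fun i _ => ?_
  obtain h0 | h1 : h.eigenvalues i = 0 ∨ h.eigenvalues i = 1 :=
    hρ.isIdempotentElem.spectrum_subset ℝ (h.eigenvalues_mem_spectrum_real i)
  · simp [h0]
  · simp [h1]

end Projections

section MaximallyMixed

variable {I : Type} [Fintype I] [DecidableEq I]

lemma eigenvalues_real_smul_one (c : ℝ) (h : ((c : ℂ) • (1 : Matrix I I ℂ)).IsHermitian)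
    (i : I) : h.eigenvalues i = c := by
  have : Nonempty I := ⟨i⟩
  have halg : (c : ℂ) • (1 : Matrix I I ℂ) = algebraMap ℝ _ c := by
    rw [Algebra.algebraMap_eq_smul_one, Complex.coe_smul]
  have hspec : h.eigenvalues i ∈ spectrum ℝ (algebraMap ℝ (Matrix I I ℂ) c) :=
    halg ▸ h.eigenvalues_mem_spectrum_real i
  rwa [spectrum.scalar_eq, Set.mem_singleton_iff] at hspec

lemma entropy_maximallyMixed : entropy (maximallyMixed I) = Real.log (Fintype.card I) := by
  set c : ℝ := (Fintype.card I : ℝ)⁻¹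
  have hc : maximallyMixed I = (c : ℂ) • 1 := by simp [maximallyMixed, c]
  have h : ((c : ℂ) • (1 : Matrix I I ℂ)).IsHermitian :=
    isHermitian_one.smul (Complex.conj_ofReal c)
  rw [hc, entropy, dif_pos h]
  simp only [eigenvalues_real_smul_one c h, Finset.sum_const, Finset.card_univ, nsmul_eq_mul]
  rcases Nat.eq_zero_or_pos (Fintype.card I) with h0 | hpos
  · simp [h0]
  · simp only [c, Real.log_inv]
    field_simp

lemma posSemidef_maximallyMixed : (maximallyMixed I).PosSemidef :=
  PosSemidef.one.smul (by positivity)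

lemma trace_maximallyMixed [Nonempty I] : (maximallyMixed I).trace = 1 := by
  simp [maximallyMixed]

end MaximallyMixed

section Convolution

variable {d n : ℕ} [NeZero d] {s t : ZMod d}

lemma convU_apply_s17 (hst : s ^ 2 + t ^ 2 = 1) (x z : PhSp d n) :
    convU d n s t x z = if z = (s • x.1 - t • x.2, t • x.1 + s • x.2) then 1 else 0 := by
  refine if_congr ?_ rfl rfl
  rw [Prod.ext_iff]
  constructor <;> rintro ⟨h1, h2⟩ <;> rw [h1, h2] <;> constructor <;> funext i <;>
    simp only [Pi.smul_apply, Pi.add_apply, Pi.sub_apply, Pi.neg_apply, smul_eq_mul] <;> grind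

lemma qconv_apply (hst : s ^ 2 + t ^ 2 = 1) (ρ σ : Mat d n) (a a' : Idx d n) :
    qconv d n s t ρ σ a a' =
      ∑ b, ρ (s • a - t • b) (s • a' - t • b) * σ (t • a + s • b) (t • a' + s • b) := by
  simp only [qconv, Matrix.of_apply, Matrix.mul_apply, Matrix.conjTranspose_apply,
    convU_apply_s17 hst, apply_ite (star : ℂ → ℂ), star_one, star_zero, ite_mul, mul_ite, one_mul,
    mul_one, zero_mul, mul_zero, Finset.sum_ite_eq', Finset.mem_univ, if_true, kron]

lemma qconv_smul_one_smul_one (hst : s ^ 2 + t ^ 2 = 1) (c c' : ℂ) :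
    qconv d n s t (c • 1) (c' • 1) = ((Fintype.card (Idx d n) : ℂ) * c * c') • 1 := by
  have hinj : ∀ a a' : Idx d n, s • a = s • a' ∧ t • a = t • a' → a = a' := by
    rintro a a' ⟨h1, h2⟩
    calc a = (s ^ 2 + t ^ 2) • a := by rw [hst, one_smul]
      _ = s • s • a + t • t • a := by module
      _ = s • s • a' + t • t • a' := by rw [h1, h2]
      _ = (s ^ 2 + t ^ 2) • a' := by module
      _ = a' := by rw [hst, one_smul]
  ext a a'
  simp only [qconv_apply hst, Matrix.smul_apply, Matrix.one_apply, sub_left_inj, add_left_inj,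
    smul_eq_mul]
  by_cases h : a = a'
  · subst h
    simp only [if_true, mul_one, Finset.sum_const, Finset.card_univ, nsmul_eq_mul]
    ring
  · rcases not_and_or.mp (mt (hinj a a') h) with h1 | h2 <;> simp [*]

lemma qconv_single_zero [Fact d.Prime] (hs : s ≠ 0) (ht : t ≠ 0) (hst : s ^ 2 + t ^ 2 = 1)
    (σ : Mat d n) :
    qconv d n s t (Matrix.single 0 0 1) σ = Matrix.diagonal fun a => σ (t⁻¹ • a) (t⁻¹ • a) := by
  have hrot : ∀ a : Idx d n, t • a + s • t⁻¹ • s • a = t⁻¹ • a := by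
    intro a
    have hscalar : t + s * (t⁻¹ * s) = t⁻¹ := by
      field_simp
      linear_combination hst
    simp only [smul_smul, ← add_smul, hscalar]
  ext a a'
  rw [qconv_apply hst, Finset.sum_eq_single (t⁻¹ • s • a)]
  · by_cases h : a = a'
    · subst h
      simp [smul_inv_smul₀ ht, hrot]
    · have hsa : s • a' - s • a ≠ 0 :=
        sub_ne_zero.mpr fun h' => h (smul_right_injective _ hs h').symm
      simp [smul_inv_smul₀ ht, Matrix.single_apply_of_col_ne _ _ hsa.symm, h]
  · intro b _ hb
    have hb' : s • a - t • b ≠ 0 := by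
      intro h0
      rw [sub_eq_zero, eq_comm, ← eq_inv_smul_iff₀ ht] at h0
      exact hb h0
    rw [Matrix.single_apply_of_row_ne hb'.symm, zero_mul]
  · simp

end Convolution

theorem no_subadditivity_general (d n : ℕ) [Fact (Nat.Prime d)] (hn : 1 ≤ n)
    (s t : ZMod d) (hs : s ≠ 0) (ht : t ≠ 0) (hst : s ^ 2 + t ^ 2 = 1) :
    let ρ₀ : Mat d n := Matrix.of fun x y => if x = 0 ∧ y = 0 then 1 else 0
    let σ₀ : Mat d n := Matrix.of fun _ _ => ((d : ℂ) ^ n)⁻¹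
    let μ : Mat d n := ((d : ℂ) ^ n)⁻¹ • (1 : Mat d n)
    entropy ρ₀ = 0 ∧ entropy σ₀ = 0 ∧
    qconv d n s t ρ₀ σ₀ = μ ∧
    entropy (qconv d n s t ρ₀ σ₀) = n * Real.log d ∧
    entropy ρ₀ + entropy σ₀ < entropy (qconv d n s t ρ₀ σ₀) ∧
    (∃ ρ σ : Mat d n, IsState d n ρ ∧ IsState d n σ ∧
      entropy ρ + entropy σ < entropy (qconv d n s t ρ σ)) ∧
    entropy μ = n * Real.log d ∧
    entropy (qconv d n s t μ μ) = n * Real.log d ∧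
    entropy (qconv d n s t μ μ) < entropy μ + entropy μ ∧
    (∃ ρ σ : Mat d n, IsState d n ρ ∧ IsState d n σ ∧
      entropy (qconv d n s t ρ σ) < entropy ρ + entropy σ) := by
  intro ρ₀ σ₀ μ
  have hρ₀ : ρ₀ = Matrix.single 0 0 1 := by
    ext x y
    simp [ρ₀, Matrix.single, eq_comm]
  have hσ₀ : σ₀ = uniformProj (Idx d n) := by simp [σ₀, uniformProj]
  have hμ : μ = maximallyMixed (Idx d n) := by simp [μ, maximallyMixed]
  have hρ₀S : IsState d n ρ₀ := hρ₀ ▸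
    ⟨posSemidef_of_isStarProjection (isStarProjection_single_one 0), trace_single_eq_same _ _⟩
  have hσ₀S : IsState d n σ₀ := hσ₀ ▸
    ⟨posSemidef_of_isStarProjection isStarProjection_uniformProj, trace_uniformProj⟩
  have hμS : IsState d n μ := hμ ▸ ⟨posSemidef_maximallyMixed, trace_maximallyMixed⟩
  have hSρ₀ : entropy ρ₀ = 0 :=
    hρ₀ ▸ entropy_eq_zero_of_isStarProjection (isStarProjection_single_one 0)
  have hSσ₀ : entropy σ₀ = 0 :=
    hσ₀ ▸ entropy_eq_zero_of_isStarProjection isStarProjection_uniformProj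
  have hSμ : entropy μ = n * Real.log d := by
    rw [hμ, entropy_maximallyMixed]
    simp [Real.log_pow]
  have hconv₁ : qconv d n s t ρ₀ σ₀ = μ := by
    rw [hρ₀, hσ₀, hμ, qconv_single_zero hs ht hst, maximallyMixed, smul_one_eq_diagonal]
    rfl
  have hconv₂ : qconv d n s t μ μ = μ := by
    rw [hμ, maximallyMixed, qconv_smul_one_smul_one hst]
    field_simp
  have hpos : 0 < (n : ℝ) * Real.log d := by
    have hlog : 0 < Real.log d := Real.log_pos (by exact_mod_cast (Fact.out : d.Prime).one_lt)
    have : 0 < (n : ℝ) := by exact_mod_cast hn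
    positivity
  rw [hconv₁, hconv₂, hSρ₀, hSσ₀, hSμ]
  refine ⟨rfl, rfl, rfl, rfl, by linarith, ⟨ρ₀, σ₀, hρ₀S, hσ₀S, ?_⟩, rfl, rfl, by linarith,
    ⟨μ, μ, hμS, hμS, ?_⟩⟩
  · rw [hconv₁, hSρ₀, hSσ₀, hSμ]; linarith
  · rw [hconv₂, hSμ]; linarith

/-- **No subadditivity or superadditivity of entropy under quantum convolution.**
(1) With `ρ₀` the projection onto `|0⟩^{⊗n}` and `σ₀` the projection onto the uniform
superposition, `S(ρ₀) = S(σ₀) = 0`, `ρ₀ ⊠ σ₀ = d^{-n} I` and `S(ρ₀ ⊠ σ₀) = n log d`,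
so `S(ρ₀ ⊠ σ₀) > S(ρ₀) + S(σ₀)`; in particular such states exist.
(2) With `μ = d^{-n} I`, `S(μ ⊠ μ) = n log d < 2 n log d = S(μ) + S(μ)`;
in particular such states exist. -/
theorem no_subadditivity (d n : ℕ) [Fact (Nat.Prime d)] (hd : Odd d) (hn : 1 ≤ n)
    (s t : ZMod d) (hs : s ≠ 0) (ht : t ≠ 0) (hst : s ^ 2 + t ^ 2 = 1) :
    let ρ₀ : Mat d n := Matrix.of fun x y => if x = 0 ∧ y = 0 then 1 else 0
    let σ₀ : Mat d n := Matrix.of fun _ _ => ((d : ℂ) ^ n)⁻¹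
    let μ : Mat d n := ((d : ℂ) ^ n)⁻¹ • (1 : Mat d n)
    entropy ρ₀ = 0 ∧ entropy σ₀ = 0 ∧
    qconv d n s t ρ₀ σ₀ = μ ∧
    entropy (qconv d n s t ρ₀ σ₀) = n * Real.log d ∧
    entropy ρ₀ + entropy σ₀ < entropy (qconv d n s t ρ₀ σ₀) ∧
    (∃ ρ σ : Mat d n, IsState d n ρ ∧ IsState d n σ ∧
      entropy ρ + entropy σ < entropy (qconv d n s t ρ σ)) ∧
    entropy μ = n * Real.log d ∧
    entropy (qconv d n s t μ μ) = n * Real.log d ∧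
    entropy (qconv d n s t μ μ) < entropy μ + entropy μ ∧
    (∃ ρ σ : Mat d n, IsState d n ρ ∧ IsState d n σ ∧
      entropy (qconv d n s t ρ σ) < entropy ρ + entropy σ) :=
  no_subadditivity_general d n hn s t hs ht hst

end QW
end
end
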